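/- The functor F : G(X)-Rep → M(X) defined by P^ρ(m) = (1/|K|) Σ_{χ∈K*} χ(m) ρ(χ, I) (for m ∈ K, zero otherwise) and Q^ρ(g) = ρ(1, Ig) is a strict tensor functor: it sends the trivial representation to the tensor unit of M(X), and satisfies P^{ρ₁⊗ρ₂}(m) = Σ_{n} P^{ρ₁}(n) ⊗ P^{ρ₂}(n⁻¹m) and the analogous identity for Q. -/

import Mathlib

/-- A crossed module: groups `X₁`, `X₂`, a right action of `X₁` on `X₂` by group
automorphisms (written `act m g` for `m^g`), and a boundary homomorphism
`δ : X₂ →* X₁` satisfying equivariance and the Peiffer identity. -/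
structure CrossedModule (X₁ X₂ : Type) [Group X₁] [Group X₂] where
  act : X₂ → X₁ → X₂
  act_one : ∀ m : X₂, act m 1 = m
  act_mul : ∀ (m : X₂) (g h : X₁), act m (g * h) = act (act m g) h
  act_hom : ∀ (m n : X₂) (g : X₁), act (m * n) g = act m g * act n g
  δ : X₂ →* X₁
  equivariance : ∀ (m : X₂) (g : X₁), δ (act m g) = g⁻¹ * δ m * g
  peiffer : ∀ m n : X₂, act m (δ n) = n⁻¹ * m * n

section Representations
open TensorProduct

variable {F : Type} [Field F] {X₁ X₂ : Type} [Group X₁] [Group X₂] [Fintype X₁] [Fintype X₂] [DecidableEq X₂]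

/-- A representation of the crossed module `X` on the `F`-vector space `V`:
an `X₂`-grading, encoded by the family of projections `P m` onto the graded
components, together with an `X₁`-action `Q` such that `P(m)Q(g) = Q(g)P(m^g)`.
These are the objects of the category `M(X)`. -/
structure XRep (F : Type) [Field F] {X₁ X₂ : Type} [Group X₁] [Group X₂] [Fintype X₂] [DecidableEq X₂]
    (X : CrossedModule X₁ X₂)
    (V : Type) [AddCommGroup V] [Module F V] where
  P : X₂ → (V →ₗ[F] V)
  Q : X₁ → (V →ₗ[F] V)
  P_orth : ∀ m n : X₂, (P m) ∘ₗ (P n) = if m = n then P m else 0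
  P_total : (∑ m : X₂, P m) = LinearMap.id
  Q_one : Q 1 = LinearMap.id
  Q_mul : ∀ g h : X₁, Q (g * h) = Q g ∘ₗ Q h
  PQ_compat : ∀ (m : X₂) (g : X₁), (P m) ∘ₗ (Q g) = (Q g) ∘ₗ (P (X.act m g))

variable {X : CrossedModule X₁ X₂}
variable {U V W U' V' W' : Type}
  [AddCommGroup U] [Module F U] [AddCommGroup V] [Module F V] [AddCommGroup W] [Module F W]
  [AddCommGroup U'] [Module F U'] [AddCommGroup V'] [Module F V'] [AddCommGroup W'] [Module F W']

/-- The grading of the tensor product: `(V ⊗ W)_m = ⊕_{nl = m} V_n ⊗ W_l`. -/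
noncomputable def tensorP (A : XRep F X V) (B : XRep F X W) (m : X₂) :
    (V ⊗[F] W) →ₗ[F] (V ⊗[F] W) :=
  ∑ n : X₂, TensorProduct.map (A.P n) (B.P (n⁻¹ * m))

/-- The diagonal `X₁`-action on the tensor product. -/
noncomputable def tensorQ (A : XRep F X V) (B : XRep F X W) (g : X₁) :
    (V ⊗[F] W) →ₗ[F] (V ⊗[F] W) :=
  TensorProduct.map (A.Q g) (B.Q g)

/-- The braiding `R_{V,W}(v ⊗ w) = ∑_{m ∈ X₂} Q_W(∂m) w ⊗ P_V(m) v`, written in terms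
of the grading data `PA` on `V` and the action data `QB` on `W`. -/
noncomputable def braidAux (X : CrossedModule X₁ X₂)
    (PA : X₂ → (V →ₗ[F] V)) (QB : X₁ → (W →ₗ[F] W)) :
    (V ⊗[F] W) →ₗ[F] (W ⊗[F] V) :=
  ∑ m : X₂, (TensorProduct.map (QB (X.δ m)) (PA m)) ∘ₗ
    (TensorProduct.comm F V W).toLinearMap

/-- The braiding `R_{V,W}` between two crossed-module representations. -/
noncomputable def braid (A : XRep F X V) (B : XRep F X W) :
    (V ⊗[F] W) →ₗ[F] (W ⊗[F] V) :=
  braidAux X A.P B.Q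

/-- Morphisms in `M(X)`: linear maps compatible with the grading and the action. -/
def IsXRepHom (A : XRep F X V) (B : XRep F X W) (f : V →ₗ[F] W) : Prop :=
  (∀ m : X₂, f ∘ₗ A.P m = B.P m ∘ₗ f) ∧ (∀ g : X₁, f ∘ₗ A.Q g = B.Q g ∘ₗ f)

end Representations

section GX

variable {X₁ X₂ : Type} [Group X₁] [Group X₂]

lemma CrossedModule.one_act (X : CrossedModule X₁ X₂) (g : X₁) : X.act 1 g = 1 := by
  have h := X.act_hom 1 1 g
  rw [mul_one] at h
  exact (left_eq_mul.mp h)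

/-- The action of `X₁` on `X₂` preserves `ker ∂`, giving an action on the kernel. -/
def CrossedModule.kerAct (X : CrossedModule X₁ X₂) (k : X.δ.ker) (g : X₁) : X.δ.ker :=
  ⟨X.act (k : X₂) g, by
    have hk : X.δ (k : X₂) = 1 := k.2
    simp [MonoidHom.mem_ker, X.equivariance, hk]⟩

lemma CrossedModule.kerAct_one (X : CrossedModule X₁ X₂) (g : X₁) :
    X.kerAct 1 g = 1 := by
  apply Subtype.ext
  show X.act ((1 : X.δ.ker) : X₂) g = ((1 : X.δ.ker) : X₂)
  simpa using X.one_act g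

lemma CrossedModule.kerAct_mul (X : CrossedModule X₁ X₂) (k k' : X.δ.ker) (g : X₁) :
    X.kerAct (k * k') g = X.kerAct k g * X.kerAct k' g := by
  apply Subtype.ext
  simpa [CrossedModule.kerAct] using X.act_hom (k : X₂) (k' : X₂) g

variable (F : Type) [Field F] (X : CrossedModule X₁ X₂) [X.δ.range.Normal]

/-- The character group `(ker ∂)* = Hom(ker ∂, F^×)` of the abelian group `ker ∂`. -/
abbrev KChar : Type := X.δ.ker →* Fˣ

/-- The cokernel `coker ∂ = X₁ / Im ∂`. -/
abbrev Coker : Type := X₁ ⧸ X.δ.range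

/-- The dual action `μ̂` of `coker ∂` on `(ker ∂)*`: `(χ^c)(k) = χ(k^{c⁻¹})`,
computed via a coset representative. -/
noncomputable def dualActQ (c : Coker X) (χ : KChar F X) : KChar F X where
  toFun k := χ (X.kerAct k (Quotient.out c)⁻¹)
  map_one' := by (try simp only []); rw [X.kerAct_one, map_one]
  map_mul' k k' := by (try simp only []); rw [X.kerAct_mul, map_mul]

variable {V : Type} [AddCommGroup V] [Module F V]

/-- `ρ` is a representation of the group `G(X) = (ker ∂)* ⋊_{μ̂} (coker ∂)` on `V`
(with the semidirect product multiplication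
`(χ, c) · (χ', c') = (χ^{c'} χ', c c')`). -/
def IsGRep (ρ : KChar F X × Coker X → (V →ₗ[F] V)) : Prop :=
  ρ (1, 1) = LinearMap.id ∧
  ∀ (χ χ' : KChar F X) (c c' : Coker X),
    ρ (dualActQ F X c' χ * χ', c * c') = ρ (χ, c) ∘ₗ ρ (χ', c')

variable [Fintype X₂] [DecidableEq X₂]
open Classical in

/-- The grading part of the functor `F : G(X)-Rep → M(X)`:
`P^ρ(m) = (1/|K|) ∑_{χ ∈ K*} χ(m) ρ(χ, I)` for `m ∈ K = ker ∂`, and `0` otherwise. -/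
noncomputable def FobP (ρ : KChar F X × Coker X → (V →ₗ[F] V)) (m : X₂) :
    V →ₗ[F] V :=
  if h : m ∈ X.δ.ker then
    (Nat.card X.δ.ker : F)⁻¹ • ∑ᶠ χ : KChar F X, ((χ ⟨m, h⟩ : Fˣ) : F) • ρ (χ, 1)
  else 0

/-- The action part of the functor `F : G(X)-Rep → M(X)`: `Q^ρ(g) = ρ(1, Ig)`. -/
def FobQ (ρ : KChar F X × Coker X → (V →ₗ[F] V)) (g : X₁) : V →ₗ[F] V :=
  ρ (1, QuotientGroup.mk g)

end GX

/-!
On `K = ker ∂` the grading `P^ρ` is `|K|⁻¹` times the inverse Fourier transform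
`charSum (χ ↦ ρ(χ, I))`, and it vanishes off `K`. The grading of a tensor product is the
convolution of the gradings, and the Fourier transform turns the pointwise product
`χ ↦ ρ₁(χ, I) ⊗ ρ₂(χ, I)` into that convolution; this is the orthogonality relation
`∑ₙ χ(n) ψ(n)⁻¹ = |K| δ_{χψ}`. For the trivial representation one needs the dual relation
`∑_χ χ(k) = |K| δ_{k1}`: by the Peiffer identity `K` is abelian, and `F` has enough roots of
unity, so characters separate the points of `K` and `|K*| = |K|`.
-/

open TensorProduct

section Characters

variable {R : Type*} [CommRing R] [IsDomain R] {K : Type*} [Group K] [Fintype K]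

theorem MonoidHom.sum_val_apply_eq_zero {χ : K →* Rˣ} (hχ : χ ≠ 1) :
    ∑ k, (χ k : R) = 0 := by
  obtain ⟨k₀, hk₀⟩ : ∃ k₀, χ k₀ ≠ 1 := by
    by_contra! h
    exact hχ (MonoidHom.ext h)
  have hinv : (χ k₀ : R) * ∑ k, (χ k : R) = ∑ k, (χ k : R) := by
    rw [Finset.mul_sum]
    exact Fintype.sum_equiv (Equiv.mulLeft k₀) _ _ fun k => by simp
  refine (mul_left_eq_self₀.mp hinv).resolve_left fun h => hk₀ ?_
  exact Units.val_eq_one.mp h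

open Classical in
theorem MonoidHom.sum_val_apply_mul_val_apply_inv (χ ψ : K →* Rˣ) :
    ∑ k, (χ k : R) * (ψ k⁻¹ : R) = if χ = ψ then (Fintype.card K : R) else 0 := by
  have hquot : ∀ k, (χ k : R) * (ψ k⁻¹ : R) = ((χ * ψ⁻¹) k : R) := fun k => by simp
  simp_rw [hquot]
  split_ifs with h
  · simp [h]
  · exact MonoidHom.sum_val_apply_eq_zero (mul_inv_eq_one.not.mpr h)

variable [Fintype (K →* Rˣ)] {M N P : Type*} [AddCommGroup M] [Module R M]
  [AddCommGroup N] [Module R N] [AddCommGroup P] [Module R P]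

def charSum (a : (K →* Rˣ) → M) (k : K) : M :=
  ∑ χ, (χ k : R) • a χ

theorem sum_bilinear_charSum (B : M →ₗ[R] N →ₗ[R] P) (a : (K →* Rˣ) → M)
    (b : (K →* Rˣ) → N) (k : K) :
    ∑ n, B (charSum a n) (charSum b (n⁻¹ * k)) =
      (Fintype.card K : R) • charSum (fun χ => B (a χ) (b χ)) k := by
  classical
  have horth : ∀ χ ψ : K →* Rˣ, ∑ n, (χ n : R) * (ψ (n⁻¹ * k) : R) =
      if χ = ψ then (Fintype.card K : R) * (χ k : R) else 0 := fun χ ψ => by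
    simp_rw [map_mul ψ, Units.val_mul, ← mul_assoc, ← Finset.sum_mul,
      MonoidHom.sum_val_apply_mul_val_apply_inv]
    split_ifs with h <;> simp [h]
  calc ∑ n, B (charSum a n) (charSum b (n⁻¹ * k))
      = ∑ χ, ∑ ψ, (∑ n, (χ n : R) * (ψ (n⁻¹ * k) : R)) • B (a χ) (b ψ) := by
        simp only [charSum, map_sum, map_smul, LinearMap.sum_apply, LinearMap.smul_apply,
          Finset.smul_sum, smul_smul, Finset.sum_smul]
        rw [Finset.sum_comm]
        refine (Finset.sum_congr rfl fun ψ _ => Finset.sum_comm).trans ?_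
        rw [Finset.sum_comm]
        simp only [mul_comm]
    _ = (Fintype.card K : R) • charSum (fun χ => B (a χ) (b χ)) k := by
        simp only [horth, ite_smul, zero_smul, Finset.sum_ite_eq, Finset.mem_univ, if_true,
          charSum, Finset.smul_sum, smul_smul]

end Characters

section Dual

variable {R : Type*} [CommRing R] [IsDomain R] {K : Type*} [CommGroup K] [Fintype K]
  [HasEnoughRootsOfUnity R (Monoid.exponent K)] [Fintype (K →* Rˣ)] [DecidableEq K]

theorem CommGroup.sum_val_monoidHom_apply (k : K) :
    ∑ χ : K →* Rˣ, (χ k : R) = if k = 1 then (Fintype.card K : R) else 0 := by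
  split_ifs with hk
  · have hcard := CommGroup.card_monoidHom_of_hasEnoughRootsOfUnity K R
    simp [hk, Nat.card_eq_fintype_card] at hcard ⊢
    rw [hcard]
  obtain ⟨ψ, hψ⟩ := CommGroup.exists_apply_ne_one_of_hasEnoughRootsOfUnity K R hk
  have hinv : (ψ k : R) * ∑ χ : K →* Rˣ, (χ k : R) = ∑ χ : K →* Rˣ, (χ k : R) := by
    rw [Finset.mul_sum]
    exact Fintype.sum_equiv (Equiv.mulLeft ψ) _ _ fun χ => by simp
  refine (mul_left_eq_self₀.mp hinv).resolve_left fun h => hψ ?_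
  exact Units.val_eq_one.mp h

theorem charSum_const {M : Type*} [AddCommGroup M] [Module R M] (x : M) (k : K) :
    charSum (R := R) (fun _ => x) k = if k = 1 then (Fintype.card K : R) • x else 0 := by
  rw [charSum, ← Finset.sum_smul, CommGroup.sum_val_monoidHom_apply]
  split_ifs <;> simp

end Dual

instance CrossedModule.instCommGroupKer {X₁ X₂ : Type} [Group X₁] [Group X₂]
    (X : CrossedModule X₁ X₂) : CommGroup X.δ.ker :=
  { (inferInstance : Group X.δ.ker) with
    mul_comm := fun a b => Subtype.ext <| by
      have hconj := X.peiffer a b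
      rw [show X.δ b = 1 from b.2, X.act_one] at hconj
      change (a * b : X₂) = b * a
      conv_rhs => rw [hconj]
      group }

section Functor

variable {F : Type} [Field F] {X₁ X₂ : Type} [Group X₁] [Group X₂]
  {X : CrossedModule X₁ X₂} [X.δ.range.Normal]
  {V W : Type} [AddCommGroup V] [Module F V] [AddCommGroup W] [Module F W]

theorem FobP_coe [Fintype (KChar F X)] (ρ : KChar F X × Coker X → (V →ₗ[F] V)) (k : X.δ.ker) :
    FobP F X ρ k = (Nat.card X.δ.ker : F)⁻¹ • charSum (fun χ => ρ (χ, 1)) k := by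
  rw [FobP, dif_pos k.2, finsum_eq_sum_of_fintype, charSum]

theorem FobP_of_notMem (ρ : KChar F X × Coker X → (V →ₗ[F] V)) {m : X₂} (hm : m ∉ X.δ.ker) :
    FobP F X ρ m = 0 :=
  dif_neg hm

theorem FobP_const [Fintype X₂] [DecidableEq X₂]
    [HasEnoughRootsOfUnity F (Monoid.exponent X.δ.ker)]
    (hK : (Nat.card X.δ.ker : F) ≠ 0) (T : V →ₗ[F] V) (m : X₂) :
    FobP F X (fun _ => T) m = if m = 1 then T else 0 := by
  classical
  have := Fintype.ofFinite (KChar F X)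
  by_cases hm : m ∈ X.δ.ker
  · lift m to X.δ.ker using hm with k
    rw [FobP_coe, charSum_const, ← Nat.card_eq_fintype_card]
    simp_rw [OneMemClass.coe_eq_one]
    split_ifs <;> simp only [smul_smul, inv_mul_cancel₀ hK, one_smul, smul_zero]
  · rw [FobP_of_notMem _ hm, if_neg fun h : m = 1 => hm (h ▸ X.δ.ker.one_mem)]

theorem FobP_tensor_coe [Fintype X₂] (hK : (Nat.card X.δ.ker : F) ≠ 0)
    (ρ₁ : KChar F X × Coker X → (V →ₗ[F] V)) (ρ₂ : KChar F X × Coker X → (W →ₗ[F] W))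
    (k : X.δ.ker) :
    FobP F X (fun p => map (ρ₁ p) (ρ₂ p)) k =
      ∑ n : X₂, map (FobP F X ρ₁ n) (FobP F X ρ₂ (n⁻¹ * k)) := by
  classical
  have := Fintype.ofFinite (KChar F X)
  have hoff : ∑ n : {n // n ∉ X.δ.ker},
      map (FobP F X ρ₁ n) (FobP F X ρ₂ ((n : X₂)⁻¹ * k)) = 0 :=
    Fintype.sum_eq_zero _ fun n => by rw [FobP_of_notMem _ n.2, map_zero_left]
  rw [← Fintype.sum_subtype_add_sum_subtype (· ∈ X.δ.ker), hoff, add_zero]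
  set c := (Nat.card X.δ.ker : F)⁻¹
  calc FobP F X (fun p => map (ρ₁ p) (ρ₂ p)) k
      = c • charSum (fun χ => map (ρ₁ (χ, 1)) (ρ₂ (χ, 1))) k := FobP_coe _ k
    _ = (c * c) • (Fintype.card X.δ.ker : F) •
          charSum (fun χ => mapBilinear (RingHom.id F) V W V W (ρ₁ (χ, 1)) (ρ₂ (χ, 1))) k := by
        rw [smul_smul, mul_assoc, ← Nat.card_eq_fintype_card, inv_mul_cancel₀ hK, mul_one]
        rfl
    _ = ∑ n : X.δ.ker, map (FobP F X ρ₁ n) (FobP F X ρ₂ ((n : X₂)⁻¹ * k)) := by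
        rw [← sum_bilinear_charSum, Finset.smul_sum]
        refine Finset.sum_congr rfl fun n _ => ?_
        rw [← Subgroup.coe_inv, ← Subgroup.coe_mul, FobP_coe, FobP_coe, mapBilinear_apply,
          map_smul_left, map_smul_right, smul_smul]

theorem FobP_tensor [Fintype X₂] (hK : (Nat.card X.δ.ker : F) ≠ 0)
    (ρ₁ : KChar F X × Coker X → (V →ₗ[F] V)) (ρ₂ : KChar F X × Coker X → (W →ₗ[F] W)) (m : X₂) :
    FobP F X (fun p => map (ρ₁ p) (ρ₂ p)) m =
      ∑ n : X₂, map (FobP F X ρ₁ n) (FobP F X ρ₂ (n⁻¹ * m)) := by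
  by_cases hm : m ∈ X.δ.ker
  · lift m to X.δ.ker using hm with k
    exact FobP_tensor_coe hK ρ₁ ρ₂ k
  rw [FobP_of_notMem _ hm]
  refine (Fintype.sum_eq_zero _ fun n => ?_).symm
  by_cases hn : n ∈ X.δ.ker
  · have hnm : n⁻¹ * m ∉ X.δ.ker := fun h => hm (by simpa using mul_mem hn h)
    rw [FobP_of_notMem _ hnm, map_zero_right]
  · rw [FobP_of_notMem _ hn, map_zero_left]

end Functor

open TensorProduct in
theorem functor_F_tensor_general {F : Type} [Field F] [IsAlgClosed F] [CharZero F]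
    {X₁ X₂ : Type} [Group X₁] [Group X₂] [Fintype X₂] [DecidableEq X₂]
    (X : CrossedModule X₁ X₂) [X.δ.range.Normal]
    {V W : Type} [AddCommGroup V] [Module F V]
    [AddCommGroup W] [Module F W]
    (ρ₁ : KChar F X × Coker X → (V →ₗ[F] V))
    (ρ₂ : KChar F X × Coker X → (W →ₗ[F] W)) :
    -- the trivial representation is sent to the tensor unit
    (∀ m : X₂, FobP F X (fun _ => (LinearMap.id : F →ₗ[F] F)) m =
      if m = 1 then LinearMap.id else 0) ∧
    (∀ g : X₁, FobQ F X (fun _ => (LinearMap.id : F →ₗ[F] F)) g = LinearMap.id) ∧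
    -- compatibility with tensor products
    (∀ m : X₂, FobP F X (fun p => TensorProduct.map (ρ₁ p) (ρ₂ p)) m =
      ∑ n : X₂, TensorProduct.map (FobP F X ρ₁ n) (FobP F X ρ₂ (n⁻¹ * m))) ∧
    (∀ g : X₁, FobQ F X (fun p => TensorProduct.map (ρ₁ p) (ρ₂ p)) g =
      TensorProduct.map (FobQ F X ρ₁ g) (FobQ F X ρ₂ g)) := by
  have hK : (Nat.card X.δ.ker : F) ≠ 0 := Nat.cast_ne_zero.mpr Nat.card_pos.ne'
  have : NeZero (Monoid.exponent X.δ.ker : F) :=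
    ⟨Nat.cast_ne_zero.mpr Monoid.exponent_ne_zero_of_finite⟩
  exact ⟨FobP_const hK _, fun _ => rfl, FobP_tensor hK ρ₁ ρ₂, fun _ => rfl⟩

open TensorProduct in
/-- The functor `F : G(X)-Rep → M(X)` is a strict tensor functor: it sends the
trivial representation to the tensor unit of `M(X)`, and on a tensor product of
representations `P^{ρ₁ ⊗ ρ₂}(m) = ∑_n P^{ρ₁}(n) ⊗ P^{ρ₂}(n⁻¹m)` and
`Q^{ρ₁ ⊗ ρ₂}(g) = Q^{ρ₁}(g) ⊗ Q^{ρ₂}(g)`. -/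
theorem functor_F_tensor {F : Type} [Field F] [IsAlgClosed F] [CharZero F]
    {X₁ X₂ : Type} [Group X₁] [Group X₂] [Fintype X₁] [Fintype X₂] [DecidableEq X₂]
    (X : CrossedModule X₁ X₂) [X.δ.range.Normal]
    {V W : Type} [AddCommGroup V] [Module F V] [FiniteDimensional F V]
    [AddCommGroup W] [Module F W] [FiniteDimensional F W]
    (ρ₁ : KChar F X × Coker X → (V →ₗ[F] V)) (h₁ : IsGRep F X ρ₁)
    (ρ₂ : KChar F X × Coker X → (W →ₗ[F] W)) (h₂ : IsGRep F X ρ₂) :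
    -- the trivial representation is sent to the tensor unit
    (∀ m : X₂, FobP F X (fun _ => (LinearMap.id : F →ₗ[F] F)) m =
      if m = 1 then LinearMap.id else 0) ∧
    (∀ g : X₁, FobQ F X (fun _ => (LinearMap.id : F →ₗ[F] F)) g = LinearMap.id) ∧
    -- compatibility with tensor products
    (∀ m : X₂, FobP F X (fun p => TensorProduct.map (ρ₁ p) (ρ₂ p)) m =
      ∑ n : X₂, TensorProduct.map (FobP F X ρ₁ n) (FobP F X ρ₂ (n⁻¹ * m))) ∧
    (∀ g : X₁, FobQ F X (fun p => TensorProduct.map (ρ₁ p) (ρ₂ p)) g =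
      TensorProduct.map (FobQ F X ρ₁ g) (FobQ F X ρ₂ g)) :=
  functor_F_tensor_general X ρ₁ ρ₂
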